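/- Let M be a model category whose underlying category is abelian and all of whose objects are cofibrant. Then every simplicial object in M is Reedy cofibrant with respect to the Reedy model structure on Func(Δ^op, M). -/

import Mathlib

open CategoryTheory Limits Opposite Simplicial

universe w v u v₁ u₁ v₂ u₂ v₃ u₃

namespace Paper
/-! ## Model category basics -/

section ModelBasics

variable {C : Type u} [Category.{v} C]

/-- `f` is a retract of `g` in the arrow category. -/
def IsRetractOf {X Y X' Y' : C} (f : X ⟶ Y) (g : X' ⟶ Y') : Prop :=
  ∃ (iX : X ⟶ X') (rX : X' ⟶ X) (iY : Y ⟶ Y') (rY : Y' ⟶ Y),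
    iX ≫ rX = 𝟙 X ∧ iY ≫ rY = 𝟙 Y ∧ iX ≫ g = f ≫ iY ∧ g ≫ rY = rX ≫ f

/-- A (closed, Quillen) model structure on a category: three classes of morphisms
satisfying two-out-of-three, retract closure, lifting and factorization axioms. -/
structure ModelStructure (C : Type u) [Category.{v} C] : Type (max u v) where
  weq : MorphismProperty C
  fib : MorphismProperty C
  cof : MorphismProperty C
  weq_id : ∀ X : C, weq (𝟙 X)
  weq_comp : ∀ {X Y Z : C} (f : X ⟶ Y) (g : Y ⟶ Z), weq f → weq g → weq (f ≫ g)
  weq_cancel_left : ∀ {X Y Z : C} (f : X ⟶ Y) (g : Y ⟶ Z), weq f → weq (f ≫ g) → weq g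
  weq_cancel_right : ∀ {X Y Z : C} (f : X ⟶ Y) (g : Y ⟶ Z), weq g → weq (f ≫ g) → weq f
  weq_retract : ∀ {X Y X' Y' : C} {f : X ⟶ Y} {g : X' ⟶ Y'}, IsRetractOf f g → weq g → weq f
  fib_retract : ∀ {X Y X' Y' : C} {f : X ⟶ Y} {g : X' ⟶ Y'}, IsRetractOf f g → fib g → fib f
  cof_retract : ∀ {X Y X' Y' : C} {f : X ⟶ Y} {g : X' ⟶ Y'}, IsRetractOf f g → cof g → cof f
  lift_cof_trivFib : ∀ {A B X Y : C} (i : A ⟶ B) (p : X ⟶ Y),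
    cof i → fib p → weq p → HasLiftingProperty i p
  lift_trivCof_fib : ∀ {A B X Y : C} (i : A ⟶ B) (p : X ⟶ Y),
    cof i → weq i → fib p → HasLiftingProperty i p
  factor_cof_trivFib : ∀ {X Y : C} (f : X ⟶ Y),
    ∃ (Z : C) (i : X ⟶ Z) (p : Z ⟶ Y), cof i ∧ fib p ∧ weq p ∧ i ≫ p = f
  factor_trivCof_fib : ∀ {X Y : C} (f : X ⟶ Y),
    ∃ (Z : C) (i : X ⟶ Z) (p : Z ⟶ Y), cof i ∧ weq i ∧ fib p ∧ i ≫ p = f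

variable (M : ModelStructure C)

/-- An object is cofibrant if any morphism from an initial object to it is a cofibration. -/
def ModelStructure.CofibrantObj (X : C) : Prop :=
  ∀ (I : C) (_ : IsInitial I) (f : I ⟶ X), M.cof f

/-- An object is fibrant if any morphism from it to a terminal object is a fibration. -/
def ModelStructure.FibrantObj (X : C) : Prop :=
  ∀ (T : C) (_ : IsTerminal T) (f : X ⟶ T), M.fib f

/-- Left properness: weak equivalences are stable under pushout along cofibrations. -/
def ModelStructure.LeftProper : Prop :=
  ∀ ⦃A B A' P : C⦄ (w : A ⟶ B) (c : A ⟶ A') (inl : B ⟶ P) (inr : A' ⟶ P),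
    IsPushout w c inl inr → M.weq w → M.cof c → M.weq inr

/-- Right properness: weak equivalences are stable under pullback along fibrations. -/
def ModelStructure.RightProper : Prop :=
  ∀ ⦃P A B A' : C⦄ (fst : P ⟶ A) (snd : P ⟶ A') (w : A ⟶ B) (p : A' ⟶ B),
    IsPullback fst snd w p → M.weq w → M.fib p → M.weq snd

/-- The right lifting property against a set of arrows. -/
def rlpOn (S : Set (Arrow C)) : MorphismProperty C :=
  fun _ _ g => ∀ a ∈ S, HasLiftingProperty a.hom g

/-- `M` is cofibrantly generated by the set `I` of generating cofibrations and the
set `J` of generating acyclic cofibrations. -/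
structure CofibrantlyGeneratedBy (M : ModelStructure C) (I J : Set (Arrow C)) : Prop where
  fib_iff : ∀ {X Y : C} (f : X ⟶ Y), M.fib f ↔ rlpOn J f
  trivFib_iff : ∀ {X Y : C} (f : X ⟶ Y), (M.fib f ∧ M.weq f) ↔ rlpOn I f
  I_cof : ∀ a ∈ I, M.cof a.hom
  J_trivCof : ∀ a ∈ J, M.cof a.hom ∧ M.weq a.hom

end ModelBasics
/-! ## Latching objects and Reedy cofibrations -/

section Latching

variable {M : Type u} [Category.{v} M]

/-- The latching category at `n`: surjections `n ↠ m` in the simplex category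
onto objects of strictly smaller dimension. -/
def LatchIx (n : SimplexCategory) : Type :=
  ObjectProperty.FullSubcategory (fun g : Under n =>
    Function.Surjective g.hom.toOrderHom ∧ g.right.len < n.len)

instance (n : SimplexCategory) : Category (LatchIx n) := ObjectProperty.FullSubcategory.category _

/-- The latching diagram of a simplicial object. -/
def latchDiagram (X : SimplicialObject M) (n : SimplexCategory) : (LatchIx n)ᵒᵖ ⥤ M :=
  (ObjectProperty.ι _ ⋙ Under.forget n).op ⋙ X

/-- The canonical cocone legs from the latching diagram into `X_n`. -/
def latchLeg (X : SimplicialObject M) (n : SimplexCategory) (j : (LatchIx n)ᵒᵖ) :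
    (latchDiagram X n).obj j ⟶ X.obj (op n) :=
  X.map (j.unop.obj.hom.op)

/-- `X` has cofibrant latching maps with respect to the class `P`: for every
colimit realization of the latching object, the induced latching map lies in `P`. -/
def LatchMapIn (P : MorphismProperty M) (X : SimplicialObject M) : Prop :=
  ∀ (n : SimplexCategory) (c : Cocone (latchDiagram X n)) (_ : IsColimit c)
    (ℓ : c.pt ⟶ X.obj (op n)),
    (∀ j, c.ι.app j ≫ ℓ = latchLeg X n j) → P ℓ

/-- `φ` is a Reedy cofibration with respect to the class `P` of cofibrations:
every realization of the relative latching map lies in `P`. -/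
def ReedyCofWrt (P : MorphismProperty M) {V W : SimplicialObject M} (φ : V ⟶ W) : Prop :=
  ∀ (n : SimplexCategory)
    (cV : Cocone (latchDiagram V n)) (_ : IsColimit cV)
    (cW : Cocone (latchDiagram W n)) (_ : IsColimit cW)
    (ℓV : cV.pt ⟶ V.obj (op n)) (_ : ∀ j, cV.ι.app j ≫ ℓV = latchLeg V n j)
    (ℓW : cW.pt ⟶ W.obj (op n)) (_ : ∀ j, cW.ι.app j ≫ ℓW = latchLeg W n j)
    (Lφ : cV.pt ⟶ cW.pt)
    (_ : ∀ j, cV.ι.app j ≫ Lφ = φ.app (op j.unop.obj.right) ≫ cW.ι.app j)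
    {Q : M} (inl : V.obj (op n) ⟶ Q) (inr : cW.pt ⟶ Q)
    (_ : IsPushout ℓV Lφ inl inr)
    (r : Q ⟶ W.obj (op n)),
    inl ≫ r = φ.app (op n) → inr ≫ r = ℓW → P r

end Latching

/-!
By Dold–Kan, each `X_n` of a simplicial object in an abelian category is the direct sum of
summands `N_m` indexed by the epimorphisms `[n] ↠ [m]`; the latching object is the sum of
those with `m < n`, so the latching map is a split monomorphism. In an additive model
category a split monomorphism `ℓ : P ⟶ X` with `X` cofibrant has the left lifting property
against trivial fibrations (correct any lift out of `X` by the retraction), so it is a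
cofibration.
-/

section ModelCategory

variable {C : Type u} [Category.{v} C]

/-- The retract argument: `i` is a retract of the cofibration in its factorization
`i = j ≫ q` with `q` a trivial fibration. -/
theorem ModelStructure.cof_of_hasLiftingProperty (ms : ModelStructure C) {A B : C} (i : A ⟶ B)
    (hi : ∀ {X Y : C} (p : X ⟶ Y), ms.fib p → ms.weq p → HasLiftingProperty i p) :
    ms.cof i := by
  obtain ⟨Z, j, q, hj, hq, hwq, hfac⟩ := ms.factor_cof_trivFib i
  have := hi q hq hwq
  have sq : CommSq j i q (𝟙 B) := ⟨by rw [Category.comp_id, hfac]⟩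
  exact ms.cof_retract
    ⟨𝟙 A, 𝟙 A, sq.lift, q, Category.id_comp _, sq.fac_right,
      by rw [Category.id_comp, sq.fac_left], by rw [hfac, Category.id_comp]⟩ hj

theorem ModelStructure.CofibrantObj.exists_lift [HasInitial C] {ms : ModelStructure C} {X : C}
    (hX : ms.CofibrantObj X) {E Y : C} {p : E ⟶ Y} (hp : ms.fib p) (hwp : ms.weq p)
    (g : X ⟶ Y) : ∃ h : X ⟶ E, h ≫ p = g := by
  have := ms.lift_cof_trivFib _ p (hX _ initialIsInitial (initial.to X)) hp hwp
  have sq : CommSq (initial.to E) (initial.to X) p g := ⟨initial.hom_ext _ _⟩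
  exact ⟨sq.lift, sq.fac_right⟩

end ModelCategory

section Preadditive

variable {C : Type u} [Category.{v} C] [Preadditive C]

/-- The lift of a square `(f, g)` is `ρ ≫ f + (𝟙 - ρ ≫ ℓ) ≫ h`, where `h ≫ p = g`. -/
theorem hasLiftingProperty_of_retraction {P X : C} {ℓ : P ⟶ X} {ρ : X ⟶ P}
    (hρ : ℓ ≫ ρ = 𝟙 P) {E Y : C} {p : E ⟶ Y}
    (hX : ∀ g : X ⟶ Y, ∃ h : X ⟶ E, h ≫ p = g) : HasLiftingProperty ℓ p where
  sq_hasLift {f g} sq := by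
    obtain ⟨h, hh⟩ := hX g
    have hℓ : ℓ ≫ (𝟙 X - ρ ≫ ℓ) = 0 := by
      rw [Preadditive.comp_sub, ← Category.assoc, hρ, Category.id_comp, Category.comp_id,
        sub_self]
    refine ⟨⟨⟨ρ ≫ f + (𝟙 X - ρ ≫ ℓ) ≫ h, ?_, ?_⟩⟩⟩
    · rw [Preadditive.comp_add, ← Category.assoc, ← Category.assoc, hρ, hℓ,
        Category.id_comp, Limits.zero_comp, add_zero]
    · rw [Preadditive.add_comp, Category.assoc, Category.assoc, hh, sq.w,
        Preadditive.sub_comp, Category.id_comp, Category.assoc]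
      abel

theorem ModelStructure.cof_of_retraction [HasInitial C] (ms : ModelStructure C) {P X : C}
    (hX : ms.CofibrantObj X) {ℓ : P ⟶ X} {ρ : X ⟶ P} (hρ : ℓ ≫ ρ = 𝟙 P) : ms.cof ℓ :=
  ms.cof_of_hasLiftingProperty ℓ fun _ hp hwp =>
    hasLiftingProperty_of_retraction hρ (hX.exists_lift hp hwp)

end Preadditive

section Splitting

open SimplicialObject

variable {C : Type u} [Category.{v} C]

def LatchIx.ofIndexSet {n : SimplexCategory} (A : Splitting.IndexSet (op n))
    (hA : ¬ A.EqId) : LatchIx n :=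
  ⟨Under.mk A.e, SimplexCategory.epi_iff_surjective.mp A.2.2,
    lt_of_not_ge fun hle => hA (A.eqId_iff_len_le.mpr hle)⟩

variable [HasZeroMorphisms C] {X : SimplicialObject C} (s : Splitting X)

/-- The projection of `X_n` onto its degenerate summands, which together form the
latching object. -/
noncomputable def latchRetraction {n : SimplexCategory}
    (c : Cocone (latchDiagram X n)) : X.obj (op n) ⟶ c.pt :=
  open Classical in
  s.desc (op n) fun A => if hA : A.EqId then 0 else
    s.ι A.1.unop.len ≫ c.ι.app (op (LatchIx.ofIndexSet A hA))

theorem latchLeg_comp_latchRetraction {n : SimplexCategory}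
    (c : Cocone (latchDiagram X n)) (j : (LatchIx n)ᵒᵖ) :
    latchLeg X n j ≫ latchRetraction s c = c.ι.app j := by
  let e : n ⟶ j.unop.obj.right := j.unop.obj.hom
  have : Epi e.op.unop := SimplexCategory.epi_iff_surjective.mpr j.unop.property.1
  refine s.hom_ext' (Δ := op j.unop.obj.right) _ _ fun B => ?_
  -- `X.map e` carries the summand `B` of `X_m` to the degenerate summand `A` of `X_n`.
  let A := B.epiComp e.op
  have hA : ¬ A.EqId := fun h => lt_irrefl n.len
    (((A.eqId_iff_len_le.mp h).trans (@SimplexCategory.len_le_of_epi _ _ B.e B.2.2)).trans_lt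
      j.unop.property.2)
  let u : j.unop ⟶ LatchIx.ofIndexSet A hA := ObjectProperty.homMk (Under.homMk B.e rfl)
  refine (s.cofan_inj_epi_naturality_assoc B e.op _).trans ?_
  refine ((s.ι_desc _ _ A).trans (dif_neg hA)).trans ?_
  rw [← c.w u.op]
  exact (Category.assoc _ _ _).symm

theorem latchMap_comp_latchRetraction {n : SimplexCategory}
    {c : Cocone (latchDiagram X n)} (hc : IsColimit c) {ℓ : c.pt ⟶ X.obj (op n)}
    (hℓ : ∀ j, c.ι.app j ≫ ℓ = latchLeg X n j) : ℓ ≫ latchRetraction s c = 𝟙 c.pt :=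
  hc.hom_ext fun j => by
    rw [← Category.assoc, hℓ, latchLeg_comp_latchRetraction, Category.comp_id]

end Splitting

/-- By the Dold–Kan correspondence `X ≅ Γ₀ (N X)`, and `Γ₀` of a chain complex is split. -/
noncomputable def splittingOfAbelian {C : Type u} [Category.{v} C] [Abelian C]
    (X : SimplicialObject C) : SimplicialObject.Splitting X :=
  (AlgebraicTopology.DoldKan.Γ₀.splitting
      (Abelian.DoldKan.equivalence.functor.obj X)).ofIso
    (Abelian.DoldKan.equivalence.unitIso.app X).symm

/-- **Statement 2.** If `M` is a model category whose underlying category is abelian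
and all of whose objects are cofibrant, then every simplicial object in `M` is Reedy
cofibrant: all latching maps are cofibrations. -/
theorem reedy_cofibrant_of_abelian_of_all_cofibrant
    (M : Type u) [Category.{v} M] [Abelian M]
    (ms : ModelStructure M)
    (hcof : ∀ X : M, ms.CofibrantObj X) :
    ∀ X : SimplicialObject M, LatchMapIn ms.cof X := by
  intro X n c hc ℓ hℓ
  exact ms.cof_of_retraction (hcof _)
    (latchMap_comp_latchRetraction (splittingOfAbelian X) hc hℓ)

end Paper
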